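/- arXiv:1407.8318 — 3 statements merged into one kernel-verified Lean document; each statement's English description precedes it below -/
import Mathlib

section
/- If e is an idempotent in a finite-dimensional Jordan algebra J over an algebraically closed field of characteristic 0, then the left multiplication operator L(e) is diagonalizable with eigenvalues contained in {0, 1/2, 1}. -/
/-!
Linearizing the Jordan identity at the idempotent `e` shows that `L = L(e)` satisfies
`2L³ - 3L² + L = 0`. This polynomial is `X (2X - 1) (X - 1)`, with simple roots `0, 1/2, 1`,
so its Lagrange interpolation polynomials split every vector into eigenvectors of `L` for these
eigenvalues; a basis of the whole space can then be extracted from these eigenvectors.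
-/

open Module Submodule

theorem exists_basis_fin_forall_mem_of_span_eq_top {K V : Type*} [DivisionRing K]
    [AddCommGroup V] [Module K V] [FiniteDimensional K V] {s : Set V} (hs : span K s = ⊤) :
    ∃ (n : ℕ) (b : Basis (Fin n) K V), ∀ i, b i ∈ s := by
  let b := Basis.ofSpan hs.ge
  have := Module.Finite.finite_basis b
  refine ⟨_, b.reindex (Finite.equivFin _), fun i => ?_⟩
  rw [Basis.reindex_apply]
  exact Basis.ofSpan_subset hs.ge ⟨_, rfl⟩

theorem Module.End.span_eigenvectors_eq_top_of_cubic {K V : Type*} [Field K] [CharZero K]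
    [AddCommGroup V] [Module K V] (f : End K V)
    (hf : ∀ v, f v + (2 : K) • f (f (f v)) = (3 : K) • f (f v)) :
    span K {v | ∃ c ∈ ({0, 1/2, 1} : Set K), f v = c • v} = ⊤ := by
  refine eq_top_iff'.2 fun v => ?_
  have h0 : f ((2 : K) • f (f v) - (3 : K) • f v + v)
      = (0 : K) • ((2 : K) • f (f v) - (3 : K) • f v + v) := by
    simp only [map_sub, map_add, map_smul, zero_smul]
    linear_combination (norm := module) hf v
  have hhalf : f ((4 : K) • f v - (4 : K) • f (f v))
      = (1/2 : K) • ((4 : K) • f v - (4 : K) • f (f v)) := by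
    simp only [map_sub, map_smul]
    linear_combination (norm := module) (-2 : K) • hf v
  have h1 : f ((2 : K) • f (f v) - f v) = (1 : K) • ((2 : K) • f (f v) - f v) := by
    simp only [map_sub, map_smul, one_smul]
    linear_combination (norm := module) hf v
  have hv : v = ((2 : K) • f (f v) - (3 : K) • f v + v) + ((4 : K) • f v - (4 : K) • f (f v))
      + ((2 : K) • f (f v) - f v) := by
    module
  rw [hv]
  exact add_mem (add_mem (subset_span ⟨0, by simp, h0⟩) (subset_span ⟨1/2, by simp, hhalf⟩))
    (subset_span ⟨1, by simp, h1⟩)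

theorem lmul_idempotent_cubic {K J : Type*} [Field K] [CharZero K] [AddCommGroup J] [Module K J]
    (mul : J →ₗ[K] J →ₗ[K] J) (comm : ∀ x y : J, mul x y = mul y x)
    (jordan : ∀ x y : J, mul x (mul (mul x x) y) = mul (mul x x) (mul x y))
    {e : J} (he : mul e e = e) (z : J) :
    mul e z + (2 : K) • mul e (mul e (mul e z)) = (3 : K) • mul e (mul e z) := by
  have hplus := jordan (e + z) e
  have hminus := jordan (e - z) e
  have hz := jordan z e
  simp only [map_add, map_sub, LinearMap.add_apply, LinearMap.sub_apply, he,
    comm z e, comm (mul z z) e, comm (mul e z) e] at hplus hminus hz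
  linear_combination (norm := module) (1/2 : K) • hplus - (1/2 : K) • hminus - hz

theorem lmul_idempotent_diagonalizable_general
    {K J : Type*} [Field K] [CharZero K]
    [AddCommGroup J] [Module K J] [FiniteDimensional K J]
    (mul : J →ₗ[K] J →ₗ[K] J)
    (comm : ∀ x y : J, mul x y = mul y x)
    (jordan : ∀ x y : J, mul x (mul (mul x x) y) = mul (mul x x) (mul x y))
    (e : J) (he : mul e e = e) :
    ∃ (n : ℕ) (b : Module.Basis (Fin n) K J) (μ : Fin n → K),
      (∀ i, mul e (b i) = μ i • b i) ∧
      (∀ i, μ i = 0 ∨ μ i = 1/2 ∨ μ i = 1) := by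
  obtain ⟨n, b, hb⟩ := exists_basis_fin_forall_mem_of_span_eq_top
    (Module.End.span_eigenvectors_eq_top_of_cubic (mul e) (lmul_idempotent_cubic mul comm jordan he))
  choose μ hμ heigen using hb
  exact ⟨n, b, μ, heigen, hμ⟩

/-- If `e` is an idempotent in a finite-dimensional Jordan algebra
over an algebraically closed field of characteristic 0, then `L(e)` is
diagonalizable with eigenvalues contained in `{0, 1/2, 1}`. -/
theorem lmul_idempotent_diagonalizable
    {K J : Type*} [Field K] [CharZero K] [IsAlgClosed K]
    [AddCommGroup J] [Module K J] [FiniteDimensional K J]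
    (mul : J →ₗ[K] J →ₗ[K] J)
    (comm : ∀ x y : J, mul x y = mul y x)
    (jordan : ∀ x y : J, mul x (mul (mul x x) y) = mul (mul x x) (mul x y))
    (e : J) (he : mul e e = e) :
    ∃ (n : ℕ) (b : Module.Basis (Fin n) K J) (μ : Fin n → K),
      (∀ i, mul e (b i) = μ i • b i) ∧
      (∀ i, μ i = 0 ∨ μ i = 1/2 ∨ μ i = 1) :=
  lmul_idempotent_diagonalizable_general mul comm jordan e he
end

section
/- Let J be a finite-dimensional Jordan algebra and A a subalgebra with ideal R. Then the subspace [A,R] ⊕ L(R) := span{[L(a),L(r)], L(r) : a ∈ A, r ∈ R} of End(J) is closed under taking Lie brackets with elements of the form [L(a),L(b)] + L(c), a,b,c ∈ A; in particular, [A,R] ⊕ L(R) is a Lie ideal of the Lie algebra [A,A] ⊕ L(A) = span{[L(a),L(b)] + L(c) : a,b,c ∈ A} ⊆ gl(J). -/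
/-!
Polarizing the Jordan identity `x (x² y) = x² (x y)` (which needs `2` to be invertible) shows
that `⁅⁅L a, L b⁆, L c⁆ = L (a (b c) - b (a c))`: the inner derivation `⁅L a, L b⁆` acts on
multiplication operators through the derivation it induces on `J`. Combined with the Jacobi
identity, this turns the brackets of `⁅L a, L b⁆` and of `L c` (`a, b, c ∈ A`) with the
generators `⁅L a', L r⁆` and `L r` (`r ∈ R`) into elements of the same shape, because `R` is an
ideal of `A`; bilinearity of the bracket passes from generators to spans.
-/

theorem lie_mem_of_mem_span_of_mem_span {K L : Type*} [CommRing K] [LieRing L]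
    [LieAlgebra K L] {s t : Set L} {N : Submodule K L} (h : ∀ x ∈ s, ∀ y ∈ t, ⁅x, y⁆ ∈ N)
    {x y : L} (hx : x ∈ Submodule.span K s) (hy : y ∈ Submodule.span K t) : ⁅x, y⁆ ∈ N := by
  have hle : Submodule.map₂ (LieModule.toEnd K L L : L →ₗ[K] Module.End K L)
      (Submodule.span K s) (Submodule.span K t) ≤ N := by
    rw [Submodule.map₂_span_span, Submodule.span_le]
    rintro _ ⟨x, hx, y, hy, rfl⟩
    exact h x hx y hy
  exact hle (Submodule.apply_mem_map₂ _ hx hy)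

section JordanMultiplication

attribute [local instance] LieRing.ofAssociativeRing

variable {K J : Type*} [CommRing K] [AddCommGroup J] [Module K J]
  {mul : J →ₗ[K] J →ₗ[K] J}

theorem jordan_identity_linearized [Invertible (2 : K)] (comm : ∀ x y : J, mul x y = mul y x)
    (jordan : ∀ x y : J, mul x (mul (mul x x) y) = mul (mul x x) (mul x y)) (a b c y : J) :
    mul a (mul (mul b c) y) - mul (mul b c) (mul a y)
      + mul b (mul (mul a c) y) - mul (mul a c) (mul b y)
      + mul c (mul (mul a b) y) - mul (mul a b) (mul c y) = 0 := by
  have e1 := jordan (a + b + c) y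
  have e2 := jordan (a + b) y
  have e3 := jordan (a + c) y
  have e4 := jordan (b + c) y
  simp only [map_add, LinearMap.add_apply, comm b a, comm c a, comm c b] at e1 e2 e3 e4
  -- inclusion–exclusion over `{a, b, c}` isolates twice the trilinear part
  have h2 : (2 : K) • (mul a (mul (mul b c) y) - mul (mul b c) (mul a y)
      + mul b (mul (mul a c) y) - mul (mul a c) (mul b y)
      + mul c (mul (mul a b) y) - mul (mul a b) (mul c y)) = 0 := by
    linear_combination (norm := module)
      e1 - e2 - e3 - e4 + jordan a y + jordan b y + jordan c y
  simpa using congrArg (⅟(2 : K) • ·) h2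

theorem lie_lie_mul_eq [Invertible (2 : K)] (comm : ∀ x y : J, mul x y = mul y x)
    (jordan : ∀ x y : J, mul x (mul (mul x x) y) = mul (mul x x) (mul x y)) (a b c : J) :
    ⁅⁅(mul a : Module.End K J), (mul b : Module.End K J)⁆, (mul c : Module.End K J)⁆
      = mul (mul a (mul b c) - mul b (mul a c)) := by
  ext y
  have k1 := jordan_identity_linearized comm jordan b c y a
  have k2 := jordan_identity_linearized comm jordan a c y b
  simp only [comm y a, comm y b, comm b a, comm c a, comm c b,
    comm (mul c y) a, comm (mul c y) b, comm (mul b y) a, comm (mul a y) b,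
    comm (mul b c) a, comm (mul a c) b,
    comm (mul b y) (mul a c), comm (mul a y) (mul b c)] at k1 k2
  simp only [Ring.lie_def, LinearMap.sub_apply, Module.End.mul_apply, map_sub]
  rw [comm (mul a (mul b c)) y, comm (mul b (mul a c)) y]
  linear_combination (norm := module) k2 - k1

theorem mul_mul_sub_mul_mul_mem {A P : Submodule K J} (hP : ∀ a ∈ A, ∀ x ∈ P, mul a x ∈ P)
    {a b c : J} (ha : a ∈ A) (hb : b ∈ A) (hc : c ∈ P) :
    mul a (mul b c) - mul b (mul a c) ∈ P :=
  P.sub_mem (hP a ha _ (hP b hb c hc)) (hP b hb _ (hP a ha c hc))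

variable (mul) in
def radicalPartGens (A R : Submodule K J) : Set (Module.End K J) :=
  {g | ∃ a ∈ A, ∃ r ∈ R, g = ⁅(mul a : Module.End K J), (mul r : Module.End K J)⁆} ∪
    {g | ∃ r ∈ R, g = mul r}

theorem lie_lie_mul_mem_span_radicalPartGens [Invertible (2 : K)]
    (comm : ∀ x y : J, mul x y = mul y x)
    (jordan : ∀ x y : J, mul x (mul (mul x x) y) = mul (mul x x) (mul x y))
    {A R : Submodule K J} (hA : ∀ x ∈ A, ∀ y ∈ A, mul x y ∈ A)
    (hR : ∀ a ∈ A, ∀ r ∈ R, mul a r ∈ R) {a b : J} (ha : a ∈ A) (hb : b ∈ A)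
    {g : Module.End K J} (hg : g ∈ radicalPartGens mul A R) :
    ⁅⁅(mul a : Module.End K J), (mul b : Module.End K J)⁆, g⁆ ∈
      Submodule.span K (radicalPartGens mul A R) := by
  rcases hg with ⟨a', ha', r, hr, rfl⟩ | ⟨r, hr, rfl⟩
  · rw [LieRing.leibniz_lie, lie_lie_mul_eq comm jordan, lie_lie_mul_eq comm jordan]
    exact add_mem
      (Submodule.subset_span (Or.inl ⟨_, mul_mul_sub_mul_mul_mem hA ha hb ha', r, hr, rfl⟩))
      (Submodule.subset_span (Or.inl ⟨a', ha', _, mul_mul_sub_mul_mul_mem hR ha hb hr, rfl⟩))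
  · rw [lie_lie_mul_eq comm jordan]
    exact Submodule.subset_span (Or.inr ⟨_, mul_mul_sub_mul_mul_mem hR ha hb hr, rfl⟩)

theorem lie_mul_mem_span_radicalPartGens [Invertible (2 : K)]
    (comm : ∀ x y : J, mul x y = mul y x)
    (jordan : ∀ x y : J, mul x (mul (mul x x) y) = mul (mul x x) (mul x y))
    {A R : Submodule K J} (hA : ∀ x ∈ A, ∀ y ∈ A, mul x y ∈ A)
    (hR : ∀ a ∈ A, ∀ r ∈ R, mul a r ∈ R) {c : J} (hc : c ∈ A)
    {g : Module.End K J} (hg : g ∈ radicalPartGens mul A R) :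
    ⁅(mul c : Module.End K J), g⁆ ∈ Submodule.span K (radicalPartGens mul A R) := by
  rcases hg with ⟨a, ha, r, hr, rfl⟩ | ⟨r, hr, rfl⟩
  · rw [← lie_skew, lie_lie_mul_eq comm jordan]
    have har : mul a (mul r c) ∈ R := by
      rw [comm r c]
      exact hR a ha _ (hR c hc r hr)
    have hra : mul r (mul a c) ∈ R := by
      rw [comm r]
      exact hR _ (hA a ha c hc) r hr
    exact neg_mem (Submodule.subset_span (Or.inr ⟨_, R.sub_mem har hra, rfl⟩))
  · exact Submodule.subset_span (Or.inl ⟨c, hc, r, hr, rfl⟩)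

end JordanMultiplication

theorem radical_part_is_lie_ideal_general
    {K J : Type*} [Field K] [CharZero K] [AddCommGroup J] [Module K J]
    (mul : J →ₗ[K] J →ₗ[K] J)
    (comm : ∀ x y : J, mul x y = mul y x)
    (jordan : ∀ x y : J, mul x (mul (mul x x) y) = mul (mul x x) (mul x y))
    (A R : Submodule K J)
    (hA : ∀ x ∈ A, ∀ y ∈ A, mul x y ∈ A)
    (hR : ∀ a ∈ A, ∀ r ∈ R, mul a r ∈ R) :
    ∀ f ∈ Submodule.span K
        {f : Module.End K J | ∃ a ∈ A, ∃ b ∈ A, ∃ c ∈ A,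
          f = ⁅(mul a : Module.End K J), (mul b : Module.End K J)⁆ + mul c},
      ∀ g ∈ Submodule.span K
        ({g : Module.End K J | ∃ a ∈ A, ∃ r ∈ R,
            g = ⁅(mul a : Module.End K J), (mul r : Module.End K J)⁆} ∪
          {g : Module.End K J | ∃ r ∈ R, g = mul r}),
      ⁅f, g⁆ ∈ Submodule.span K
        ({g : Module.End K J | ∃ a ∈ A, ∃ r ∈ R,
            g = ⁅(mul a : Module.End K J), (mul r : Module.End K J)⁆} ∪
          {g : Module.End K J | ∃ r ∈ R, g = mul r}) := by
  let _ := LieRing.ofAssociativeRing (A := Module.End K J)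
  have : Invertible (2 : K) := invertibleTwo
  intro f hf g hg
  refine lie_mem_of_mem_span_of_mem_span ?_ hf hg
  rintro _ ⟨a, ha, b, hb, c, hc, rfl⟩ g hg
  rw [add_lie]
  exact add_mem (lie_lie_mul_mem_span_radicalPartGens comm jordan hA hR ha hb hg)
    (lie_mul_mem_span_radicalPartGens comm jordan hA hR hc hg)

/-- Let `A` be a subalgebra of a finite-dimensional Jordan algebra
`J` and `R` an ideal of `A`. Then the subspace
`[A,R] ⊕ L(R) = span{[L(a),L(r)], L(r) : a ∈ A, r ∈ R}` of `End(J)` is a Lie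
ideal of `[A,A] ⊕ L(A) = span{[L(a),L(b)] + L(c) : a,b,c ∈ A}`: bracketing any
element of the latter with any element of the former lands in the former. -/
theorem radical_part_is_lie_ideal
    {K J : Type*} [Field K] [CharZero K] [AddCommGroup J] [Module K J]
    [FiniteDimensional K J]
    (mul : J →ₗ[K] J →ₗ[K] J)
    (comm : ∀ x y : J, mul x y = mul y x)
    (jordan : ∀ x y : J, mul x (mul (mul x x) y) = mul (mul x x) (mul x y))
    (A R : Submodule K J)
    (hA : ∀ x ∈ A, ∀ y ∈ A, mul x y ∈ A)
    (hRA : R ≤ A)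
    (hR : ∀ a ∈ A, ∀ r ∈ R, mul a r ∈ R) :
    ∀ f ∈ Submodule.span K
        {f : Module.End K J | ∃ a ∈ A, ∃ b ∈ A, ∃ c ∈ A,
          f = ⁅(mul a : Module.End K J), (mul b : Module.End K J)⁆ + mul c},
      ∀ g ∈ Submodule.span K
        ({g : Module.End K J | ∃ a ∈ A, ∃ r ∈ R,
            g = ⁅(mul a : Module.End K J), (mul r : Module.End K J)⁆} ∪
          {g : Module.End K J | ∃ r ∈ R, g = mul r}),
      ⁅f, g⁆ ∈ Submodule.span K
        ({g : Module.End K J | ∃ a ∈ A, ∃ r ∈ R,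
            g = ⁅(mul a : Module.End K J), (mul r : Module.End K J)⁆} ∪
          {g : Module.End K J | ∃ r ∈ R, g = mul r}) :=
  radical_part_is_lie_ideal_general mul comm jordan A R hA hR
end

section
/- Let J be a finite-dimensional semi-simple Jordan algebra over an algebraically closed field of characteristic 0 and λ: K* → Aut(J) a one-parameter subgroup. If 0 = lim_{t→0} λ(t)·x for some x ∈ Jⁿ (componentwise), then the subalgebra A(x) generated by the components of x is contained in J_{>0}(λ) and hence is solvable. -/
/-!
Weights add under multiplication, so the subspaces `J_{≥m}(λ)` form a filtration with
`J_{≥m} · J_{≥m'} ⊆ J_{≥m+m'}`. Hence `J_{>0} = J_{≥1}` is a subalgebra containing `A(x)`, and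
the `N`-th derived algebra of `A(x)` lies in `J_{≥2^N}`. Since only finitely many weight spaces
of the finite-dimensional `J` are nonzero, `J_{≥2^N} = 0` for large `N`.
-/

variable {K J : Type*} [Field K] [AddCommGroup J] [Module K J]

/-- The weight space `J_k(λ) = {z ∈ J | λ(t)·z = t^k • z for all t ∈ K*}`. -/
def weightSpace (lam : Kˣ →* (J ≃ₗ[K] J)) (k : ℤ) : Submodule K J where
  carrier := {z | ∀ t : Kˣ, lam t z = ((t ^ k : Kˣ) : K) • z}
  add_mem' := by
    intro a b ha hb t
    simp [map_add, ha t, hb t, smul_add]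
  zero_mem' := by intro t; simp
  smul_mem' := by
    intro c a ha t
    rw [map_smul, ha t, smul_comm]

/-- The Jordan subalgebra generated by a set `s ⊆ J`. -/
def genSubalgebra (mul : J →ₗ[K] J →ₗ[K] J) (s : Set J) : Submodule K J :=
  sInf {A : Submodule K J | (∀ x ∈ A, ∀ y ∈ A, mul x y ∈ A) ∧ s ⊆ A}

/-- The derived series of a subspace `A` of a Jordan algebra. -/
def derSeries (mul : J →ₗ[K] J →ₗ[K] J) (A : Submodule K J) : ℕ → Submodule K J
  | 0 => A
  | n + 1 => Submodule.span K
      {z : J | ∃ a ∈ derSeries mul A n, ∃ b ∈ derSeries mul A n, z = mul a b}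

/-- A subspace is solvable if its derived series reaches zero. -/
def IsSolvableSubalgebra (mul : J →ₗ[K] J →ₗ[K] J) (A : Submodule K J) : Prop :=
  ∃ n : ℕ, derSeries mul A n = ⊥

/-- `J_{≥m}(λ) = ⊕_{k ≥ m} J_k(λ)`. -/
def weightSpacesGE (lam : Kˣ →* (J ≃ₗ[K] J)) (m : ℤ) : Submodule K J :=
  ⨆ k : ℤ, ⨆ _ : m ≤ k, weightSpace lam k

lemma genSubalgebra_le {mul : J →ₗ[K] J →ₗ[K] J} {s : Set J} {A : Submodule K J}
    (hA : ∀ x ∈ A, ∀ y ∈ A, mul x y ∈ A) (hs : s ⊆ A) : genSubalgebra mul s ≤ A :=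
  sInf_le ⟨hA, hs⟩

section Weights

variable {lam : Kˣ →* (J ≃ₗ[K] J)}

lemma mul_mem_weightSpace_add (mul : J →ₗ[K] J →ₗ[K] J)
    (hlam : ∀ (t : Kˣ) (x y : J), lam t (mul x y) = mul (lam t x) (lam t y))
    {k l : ℤ} {a b : J} (ha : a ∈ weightSpace lam k) (hb : b ∈ weightSpace lam l) :
    mul a b ∈ weightSpace lam (k + l) := fun t => by
  rw [hlam t a b, ha t, hb t, map_smul, LinearMap.map_smul₂, smul_smul, ← Units.val_mul,
    ← zpow_add, add_comm l k]

lemma weightSpace_le_weightSpacesGE {m k : ℤ} (h : m ≤ k) :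
    weightSpace lam k ≤ weightSpacesGE lam m :=
  le_iSup₂_of_le k h le_rfl

lemma weightSpacesGE_antitone : Antitone (weightSpacesGE lam) := fun _ _ h =>
  iSup₂_le fun _ hk => weightSpace_le_weightSpacesGE (h.trans hk)

lemma iSup_pos_weightSpace_eq_weightSpacesGE_one :
    ⨆ k : ℤ, ⨆ _ : 0 < k, weightSpace lam k = weightSpacesGE lam 1 := rfl

lemma mul_mem_weightSpacesGE_add (mul : J →ₗ[K] J →ₗ[K] J)
    (hlam : ∀ (t : Kˣ) (x y : J), lam t (mul x y) = mul (lam t x) (lam t y))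
    {m m' : ℤ} {a b : J} (ha : a ∈ weightSpacesGE lam m) (hb : b ∈ weightSpacesGE lam m') :
    mul a b ∈ weightSpacesGE lam (m + m') := by
  rw [weightSpacesGE, iSup_subtype'] at ha hb
  induction ha using Submodule.iSup_induction' with
  | mem i a hai =>
    induction hb using Submodule.iSup_induction' with
    | mem j b hbj =>
      exact weightSpace_le_weightSpacesGE (add_le_add i.2 j.2)
        (mul_mem_weightSpace_add mul hlam hai hbj)
    | zero => simp
    | add y z _ _ hy hz => simpa only [map_add] using add_mem hy hz
  | zero => simp
  | add y z _ _ hy hz => simpa only [map_add, LinearMap.add_apply] using add_mem hy hz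

lemma derSeries_le_weightSpacesGE (mul : J →ₗ[K] J →ₗ[K] J)
    (hlam : ∀ (t : Kˣ) (x y : J), lam t (mul x y) = mul (lam t x) (lam t y))
    {A : Submodule K J} {m : ℤ} (hA : A ≤ weightSpacesGE lam m) (N : ℕ) :
    derSeries mul A N ≤ weightSpacesGE lam (2 ^ N * m) := by
  induction N with
  | zero => simpa [derSeries] using hA
  | succ N ih =>
    rw [derSeries, Submodule.span_le]
    rintro _ ⟨a, ha, b, hb, rfl⟩
    rw [pow_succ, mul_comm _ (2 : ℤ), mul_assoc, two_mul]
    exact mul_mem_weightSpacesGE_add mul hlam (ih ha) (ih hb)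

lemma exists_weightSpacesGE_eq_bot [IsNoetherian K J] (hind : iSupIndep (weightSpace lam)) :
    ∃ M : ℤ, ∀ m, M < m → weightSpacesGE lam m = ⊥ := by
  obtain ⟨M, hM⟩ := (WellFoundedGT.finite_ne_bot_of_iSupIndep hind).bddAbove
  refine ⟨M, fun m hm => eq_bot_iff.mpr (iSup₂_le fun k hk => ?_)⟩
  by_contra hne
  exact absurd (hM fun hbot => hne hbot.le) (by omega)

lemma isSolvableSubalgebra_of_le_weightSpacesGE_one [IsNoetherian K J]
    (mul : J →ₗ[K] J →ₗ[K] J)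
    (hlam : ∀ (t : Kˣ) (x y : J), lam t (mul x y) = mul (lam t x) (lam t y))
    (hind : iSupIndep (weightSpace lam)) {A : Submodule K J}
    (hA : A ≤ weightSpacesGE lam 1) : IsSolvableSubalgebra mul A := by
  obtain ⟨M, hM⟩ := exists_weightSpacesGE_eq_bot hind
  have hM_lt : M < 2 ^ M.toNat * 1 := by
    have := Nat.lt_two_pow_self (n := M.toNat)
    have := Int.self_le_toNat M
    zify at *
    omega
  exact ⟨M.toNat, le_bot_iff.mp <|
    (derSeries_le_weightSpacesGE mul hlam hA _).trans (hM _ hM_lt).le⟩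

end Weights

theorem limit_zero_implies_solvable_general
    [FiniteDimensional K J]
    (mul : J →ₗ[K] J →ₗ[K] J)
    (lam : Kˣ →* (J ≃ₗ[K] J))
    (hlam : ∀ (t : Kˣ) (x y : J), lam t (mul x y) = mul (lam t x) (lam t y))
    (hdecomp : DirectSum.IsInternal (weightSpace (J := J) lam))
    (n : ℕ) (x : Fin n → J)
    (hx : ∀ j : Fin n, x j ∈ ⨆ k : ℤ, ⨆ _ : 0 < k, weightSpace (J := J) lam k) :
    genSubalgebra mul (Set.range x) ≤
        (⨆ k : ℤ, ⨆ _ : 0 < k, weightSpace (J := J) lam k) ∧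
      IsSolvableSubalgebra mul (genSubalgebra mul (Set.range x)) := by
  rw [iSup_pos_weightSpace_eq_weightSpacesGE_one] at hx ⊢
  have hle : genSubalgebra mul (Set.range x) ≤ weightSpacesGE lam 1 :=
    genSubalgebra_le
      (fun a ha b hb => weightSpacesGE_antitone (by norm_num)
        (mul_mem_weightSpacesGE_add mul hlam ha hb))
      (Set.range_subset_iff.mpr hx)
  exact ⟨hle, isSolvableSubalgebra_of_le_weightSpacesGE_one mul hlam
    hdecomp.submodule_iSupIndep hle⟩

/-- Let `J` be a finite-dimensional semi-simple Jordan algebra over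
an algebraically closed field of characteristic 0 and `λ : K* → Aut(J)` a
one-parameter subgroup (with weight space decomposition).  If
`lim_{t→0} λ(t)·x = 0` for `x ∈ Jⁿ`, i.e. every component of `x` lies in
`J_{>0}(λ)`, then the subalgebra `A(x)` generated by the components of `x` is
contained in `J_{>0}(λ)` and hence solvable. -/
theorem limit_zero_implies_solvable
    [CharZero K] [IsAlgClosed K] [FiniteDimensional K J]
    (mul : J →ₗ[K] J →ₗ[K] J)
    (comm : ∀ x y : J, mul x y = mul y x)
    (jordan : ∀ x y : J, mul x (mul (mul x x) y) = mul (mul x x) (mul x y))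
    (hnd : ∀ x : J, (∀ y : J, LinearMap.trace K J (mul (mul x y)) = 0) → x = 0)
    (lam : Kˣ →* (J ≃ₗ[K] J))
    (hlam : ∀ (t : Kˣ) (x y : J), lam t (mul x y) = mul (lam t x) (lam t y))
    (hdecomp : DirectSum.IsInternal (weightSpace (J := J) lam))
    (n : ℕ) (x : Fin n → J)
    (hx : ∀ j : Fin n, x j ∈ ⨆ k : ℤ, ⨆ _ : 0 < k, weightSpace (J := J) lam k) :
    genSubalgebra mul (Set.range x) ≤
        (⨆ k : ℤ, ⨆ _ : 0 < k, weightSpace (J := J) lam k) ∧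
      IsSolvableSubalgebra mul (genSubalgebra mul (Set.range x)) :=
  limit_zero_implies_solvable_general mul lam hlam hdecomp n x hx
end
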